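/- arXiv:2004.04369 — 8 statements merged into one kernel-verified Lean document; each statement's English description precedes it below -/
import Mathlib

section
/- Let J be a nonzero real d×d matrix. The map from ℝ^d × ℝ to (d+1)×(d+1) real matrices sending (v,t) to the matrix exponential of the block matrix fromBlocks [[0,0],[v, t·J]] is injective if and only if the complexification of J (the matrix J with entries viewed in ℂ) has no eigenvalue that is nonzero and purely imaginary. -/
open scoped Matrix
open NormedSpace

noncomputable section

/-- `S(A) = ∑_{n ≥ 0} Aⁿ/(n+1)!`, the power series with `A * S(A) = exp A - 1`. -/
def matS {d : ℕ} (A : Matrix (Fin d) (Fin d) ℝ) : Matrix (Fin d) (Fin d) ℝ :=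
  ∑' n : ℕ, (((n + 1).factorial : ℝ))⁻¹ • A ^ n

/-!
Write `S(A) = ∑ Aⁿ/(n+1)!` (`expSubOneDiv A`), so that `exp A = 1 + A S(A)`. Summing the
exponential series blockwise, `exp [[0,0],[v,tJ]] = [[1,0],[S(tJ) v, exp(tJ)]]`. Hence the map
is injective iff `S(tJ)` is invertible for every real `t`: a kernel vector `v` of `S(tJ)` gives
`(v,t)` and `(0,t)` the same image, and conversely `exp(tJ) = exp(sJ)` gives `exp((t-s)J) = 1`,
i.e. `(t-s)J S((t-s)J) = 0`, which forces `t = s` as `J ≠ 0`.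

Since `S(A)` commutes with `A`, its kernel, if nonzero, contains an eigenvector of `A`; on an
eigenvector with eigenvalue `μ`, `S(A)` acts as the scalar `S(μ) = (e^μ - 1)/μ`. So `S(A)` is
singular iff some eigenvalue of `A` lies in `2πiℤ ∖ {0}`, and a real multiple of an eigenvalue `z`
of `J` lies there iff `z` is nonzero and purely imaginary.
-/

open scoped Nat

def expSubOneDiv {𝔸 : Type*} [Ring 𝔸] [Algebra ℚ 𝔸] [TopologicalSpace 𝔸] (a : 𝔸) : 𝔸 :=
  ∑' n : ℕ, ((n + 1)! : ℚ)⁻¹ • a ^ n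

section Topological

variable {𝔸 : Type*} [Ring 𝔸] [Algebra ℚ 𝔸] [TopologicalSpace 𝔸]

theorem expSubOneDiv_zero : expSubOneDiv (0 : 𝔸) = 1 := by
  rw [expSubOneDiv, tsum_eq_single 0 fun n hn => by simp [zero_pow hn]]
  simp

theorem Commute.expSubOneDiv_right [IsTopologicalSemiring 𝔸] [T2Space 𝔸] {a b : 𝔸}
    (h : Commute a b) : Commute a (expSubOneDiv b) :=
  Commute.tsum_right a fun n => (h.pow_right n).smul_right _

end Topological

section Normed

variable {𝔸 : Type*} [NormedRing 𝔸] [NormedAlgebra ℚ 𝔸] [CompleteSpace 𝔸]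

theorem hasSum_expSubOneDiv (a : 𝔸) :
    HasSum (fun n : ℕ => ((n + 1)! : ℚ)⁻¹ • a ^ n) (expSubOneDiv a) := by
  refine Summable.hasSum (.of_norm_bounded (norm_expSeries_summable' (𝕂 := ℚ) a) fun n => ?_)
  rw [norm_smul, norm_smul]
  gcongr
  simp only [← Rat.norm_cast_real, Rat.cast_natCast, norm_inv, Real.norm_natCast]
  gcongr
  exact n.le_succ

theorem hasSum_mul_expSubOneDiv (a : 𝔸) :
    HasSum (fun n : ℕ => ((n + 1)! : ℚ)⁻¹ • a ^ (n + 1)) (a * expSubOneDiv a) := by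
  simpa only [pow_succ', mul_smul_comm] using (hasSum_expSubOneDiv a).mul_left a

theorem exp_eq_one_add_mul_expSubOneDiv (a : 𝔸) : exp a = 1 + a * expSubOneDiv a := by
  rw [congrFun exp_eq_tsum_rat a]
  refine ((hasSum_nat_add_iff' 1).1 ?_).tsum_eq
  simpa using hasSum_mul_expSubOneDiv a

theorem map_expSubOneDiv {𝔹 F : Type*} [Ring 𝔹] [Algebra ℚ 𝔹] [TopologicalSpace 𝔹] [T2Space 𝔹]
    [FunLike F 𝔸 𝔹] [RingHomClass F 𝔸 𝔹] (f : F) (hf : Continuous f) (a : 𝔸) :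
    f (expSubOneDiv a) = expSubOneDiv (f a) := by
  simp only [expSubOneDiv, (hasSum_expSubOneDiv a).summable.map_tsum f hf, map_rat_smul, map_pow]

end Normed

namespace Complex

theorem expSubOneDiv_eq_zero_iff (z : ℂ) : expSubOneDiv z = 0 ↔ z ≠ 0 ∧ exp z = 1 := by
  rcases eq_or_ne z 0 with rfl | hz
  · simp [expSubOneDiv_zero]
  · rw [exp_eq_exp_ℂ, exp_eq_one_add_mul_expSubOneDiv, add_eq_left, mul_eq_zero]
    simp [hz]

theorem exists_ofReal_mul_ne_zero_exp_eq_one_iff (z : ℂ) :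
    (∃ t : ℝ, t * z ≠ 0 ∧ exp (t * z) = 1) ↔ z ≠ 0 ∧ z.re = 0 := by
  constructor
  · rintro ⟨t, htz, hexp⟩
    obtain ⟨k, hk⟩ := exp_eq_one_iff.1 hexp
    have ht : t ≠ 0 := by rintro rfl; simp at htz
    exact ⟨right_ne_zero_of_mul htz, by simpa [ht] using congrArg re hk⟩
  · rintro ⟨hz, hre⟩
    have him : z.im ≠ 0 := fun h => hz (ext hre h)
    have htz : ((2 * Real.pi / z.im : ℝ) : ℂ) * z = 2 * Real.pi * I := by
      apply ext <;> simp [hre]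
      field_simp
    exact ⟨2 * Real.pi / z.im, htz ▸ ⟨two_pi_I_ne_zero, exp_two_pi_mul_I⟩⟩

end Complex

theorem Module.End.exists_hasEigenvector_of_commute_of_ker_ne_bot {K V : Type*} [Field K]
    [IsAlgClosed K] [AddCommGroup V] [Module K V] [FiniteDimensional K V] {f g : Module.End K V}
    (hfg : Commute f g) (hg : LinearMap.ker g ≠ ⊥) :
    ∃ μ v, f.HasEigenvector μ v ∧ g v = 0 := by
  have hmaps : ∀ v ∈ LinearMap.ker g, f v ∈ LinearMap.ker g := fun v hv => by
    rw [LinearMap.mem_ker, ← Module.End.mul_apply, ← hfg.eq, Module.End.mul_apply,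
      LinearMap.mem_ker.1 hv, map_zero]
  have : Nontrivial (LinearMap.ker g) := Submodule.nontrivial_iff_ne_bot.2 hg
  obtain ⟨μ, hμ⟩ := Module.End.exists_eigenvalue (f.restrict hmaps)
  obtain ⟨⟨v, hv⟩, hμv⟩ := hμ.exists_hasEigenvector
  refine ⟨μ, v, ⟨Module.End.mem_eigenspace_iff.2 ?_, ?_⟩, hv⟩
  · exact congrArg Subtype.val hμv.apply_eq_smul
  · simpa using hμv.2

theorem HasSum.matrix_fromBlocks {X l m n o R : Type*} [AddCommMonoid R] [TopologicalSpace R]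
    {f : X → Matrix n l R} {g : X → Matrix n m R} {h : X → Matrix o l R} {k : X → Matrix o m R}
    {A : Matrix n l R} {B : Matrix n m R} {C : Matrix o l R} {D : Matrix o m R}
    (hf : HasSum f A) (hg : HasSum g B) (hh : HasSum h C) (hk : HasSum k D) :
    HasSum (fun x => Matrix.fromBlocks (f x) (g x) (h x) (k x)) (Matrix.fromBlocks A B C D) := by
  refine Pi.hasSum.2 fun i => Pi.hasSum.2 fun j => ?_
  rcases i with i | i <;> rcases j with j | j
  exacts [Pi.hasSum.1 (Pi.hasSum.1 hf i) j, Pi.hasSum.1 (Pi.hasSum.1 hg i) j,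
    Pi.hasSum.1 (Pi.hasSum.1 hh i) j, Pi.hasSum.1 (Pi.hasSum.1 hk i) j]

namespace Matrix

variable {n : Type*} [Fintype n] [DecidableEq n]

section RCLike

variable {𝕜 : Type*} [RCLike 𝕜]

theorem hasSum_expSubOneDiv (A : Matrix n n 𝕜) :
    HasSum (fun k : ℕ => ((k + 1)! : ℚ)⁻¹ • A ^ k) (expSubOneDiv A) :=
  open scoped Norms.Operator in _root_.hasSum_expSubOneDiv A

theorem hasSum_mul_expSubOneDiv (A : Matrix n n 𝕜) :
    HasSum (fun k : ℕ => ((k + 1)! : ℚ)⁻¹ • A ^ (k + 1)) (A * expSubOneDiv A) :=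
  open scoped Norms.Operator in _root_.hasSum_mul_expSubOneDiv A

theorem exp_eq_one_add_mul_expSubOneDiv (A : Matrix n n 𝕜) : exp A = 1 + A * expSubOneDiv A :=
  open scoped Norms.Operator in _root_.exp_eq_one_add_mul_expSubOneDiv A

theorem expSubOneDiv_mulVec_of_hasEigenvector {A : Matrix n n 𝕜} {μ : 𝕜} {u : n → 𝕜}
    (hu : Module.End.HasEigenvector (toLin' A) μ u) :
    expSubOneDiv A *ᵥ u = expSubOneDiv μ • u := by
  refine ((hasSum_expSubOneDiv A).map (AddMonoidHom.mk' (· *ᵥ u) fun _ _ => add_mulVec _ _ _)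
    (continuous_id.matrix_mulVec continuous_const)).unique ?_
  convert (_root_.hasSum_expSubOneDiv μ).smul_const u using 2 with k
  simp only [Function.comp_apply, AddMonoidHom.mk'_apply]
  rw [smul_mulVec, ← toLin'_apply, toLin'_pow, hu.pow_apply, smul_assoc]

end RCLike

theorem isUnit_expSubOneDiv_iff (A : Matrix n n ℂ) :
    IsUnit (expSubOneDiv A) ↔ ∀ μ ∈ spectrum ℂ A, expSubOneDiv μ ≠ 0 := by
  simp_rw [← spectrum_toLin', ← Module.End.hasEigenvalue_iff_mem_spectrum]
  constructor
  · intro hS μ hμ hSμ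
    obtain ⟨u, hu⟩ := hμ.exists_hasEigenvector
    have hSu : expSubOneDiv A *ᵥ u = expSubOneDiv A *ᵥ 0 := by
      rw [expSubOneDiv_mulVec_of_hasEigenvector hu, hSμ, zero_smul, mulVec_zero]
    exact hu.2 (mulVec_injective_iff_isUnit.2 hS hSu)
  · intro h
    by_contra hS
    have hker : LinearMap.ker (toLin' (expSubOneDiv A)) ≠ ⊥ := by
      rwa [Ne, ← LinearMap.isUnit_iff_ker_eq_bot, isUnit_toLin'_iff]
    have hcomm : Commute (toLin' A) (toLin' (expSubOneDiv A)) :=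
      ((Commute.refl A).expSubOneDiv_right).map toLinAlgEquiv'
    obtain ⟨μ, u, hu, hSu⟩ := Module.End.exists_hasEigenvector_of_commute_of_ker_ne_bot hcomm hker
    rw [toLin'_apply, expSubOneDiv_mulVec_of_hasEigenvector hu, smul_eq_zero] at hSu
    exact h μ (Module.End.hasEigenvalue_of_hasEigenvector hu) (hSu.resolve_right hu.2)

theorem isUnit_expSubOneDiv_map_ofReal_iff (M : Matrix n n ℝ) :
    IsUnit (expSubOneDiv (M.map Complex.ofReal)) ↔ IsUnit (expSubOneDiv M) := by
  have hmap : Complex.ofRealHom.mapMatrix (expSubOneDiv M) = expSubOneDiv (M.map Complex.ofReal) :=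
    open scoped Norms.Operator in
    map_expSubOneDiv _ (continuous_id.matrix_map Complex.continuous_ofReal) M
  rw [← hmap, isUnit_iff_isUnit_det, isUnit_iff_isUnit_det, ← RingHom.map_det, isUnit_map_iff]

theorem forall_isUnit_expSubOneDiv_ofReal_smul_iff (B : Matrix n n ℂ) :
    (∀ t : ℝ, IsUnit (expSubOneDiv ((t : ℂ) • B))) ↔
      ¬∃ z ∈ spectrum ℂ B, z ≠ 0 ∧ z.re = 0 := by
  simp_rw [isUnit_expSubOneDiv_iff, Ne, Complex.expSubOneDiv_eq_zero_iff,
    ← Complex.exists_ofReal_mul_ne_zero_exp_eq_one_iff]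
  constructor
  · rintro h ⟨z, hz, t, htz, hexp⟩
    have ht : (t : ℂ) ≠ 0 := left_ne_zero_of_mul htz
    exact h t (t * z) ((spectrum.smul_mem_smul_iff (r := Units.mk0 _ ht)).2 hz) ⟨htz, hexp⟩
  · rintro h t μ hμ ⟨hμ0, hexp⟩
    have ht : (t : ℂ) ≠ 0 := by
      rintro h0
      rw [h0, zero_smul] at hμ
      exact spectrum.mem_iff.1 hμ (by simpa using (Ne.isUnit hμ0).map (algebraMap ℂ (Matrix n n ℂ)))
    rw [← mul_inv_cancel_left₀ ht μ] at hμ hμ0 hexp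
    exact h ⟨_, (spectrum.smul_mem_smul_iff (r := Units.mk0 _ ht)).1 hμ, t, hμ0, hexp⟩

variable {m R : Type*} [Fintype m] [DecidableEq m]

theorem fromBlocks_zero_pow_succ [Semiring R] (C : Matrix n m R) (D : Matrix n n R) (k : ℕ) :
    fromBlocks (0 : Matrix m m R) 0 C D ^ (k + 1) = fromBlocks 0 0 (D ^ k * C) (D ^ (k + 1)) := by
  induction k with
  | zero => simp
  | succ k ih =>
    rw [pow_succ, ih, fromBlocks_multiply]
    simp [← pow_succ]

theorem exp_fromBlocks_zero [RCLike R] (C : Matrix n m R) (D : Matrix n n R) :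
    exp (fromBlocks (0 : Matrix m m R) 0 C D) = fromBlocks 1 0 (expSubOneDiv D * C) (exp D) := by
  have hC : HasSum (fun k : ℕ => ((k + 1)! : ℚ)⁻¹ • (D ^ k * C)) (expSubOneDiv D * C) := by
    simpa only [Function.comp_def, AddMonoidHom.mk'_apply, smul_mul] using
      (hasSum_expSubOneDiv D).map (AddMonoidHom.mk' (· * C) fun _ _ => Matrix.add_mul _ _ _)
        (continuous_id.matrix_mul continuous_const)
  have hM : fromBlocks (0 : Matrix m m R) 0 C D * expSubOneDiv (fromBlocks 0 0 C D) =
      fromBlocks 0 0 (expSubOneDiv D * C) (D * expSubOneDiv D) := by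
    refine (hasSum_mul_expSubOneDiv _).unique ?_
    simp_rw [fromBlocks_zero_pow_succ, fromBlocks_smul, smul_zero]
    exact hasSum_zero.matrix_fromBlocks hasSum_zero hC (hasSum_mul_expSubOneDiv D)
  rw [exp_eq_one_add_mul_expSubOneDiv, hM, exp_eq_one_add_mul_expSubOneDiv D, ← fromBlocks_one,
    fromBlocks_add]
  simp

theorem injective_exp_fromBlocks_iff {J : Matrix n n ℝ} (hJ : J ≠ 0) :
    Function.Injective (fun p : (n → ℝ) × ℝ =>
        exp (fromBlocks (0 : Matrix (Fin 1) (Fin 1) ℝ) 0 (replicateCol (Fin 1) p.1) (p.2 • J))) ↔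
      ∀ t : ℝ, IsUnit (expSubOneDiv (t • J)) := by
  simp only [exp_fromBlocks_zero, ← replicateCol_mulVec]
  constructor
  · intro hinj t
    refine mulVec_injective_iff_isUnit.1 fun v w hvw => congrArg Prod.fst (@hinj (v, t) (w, t) ?_)
    simp only [hvw]
  · rintro hS ⟨v, t⟩ ⟨w, s⟩ h
    dsimp only at h
    obtain ⟨-, -, hSvw, hexp⟩ := fromBlocks_inj.1 h
    obtain rfl : t = s := by
      have hcomm : Commute ((t - s) • J) (s • J) := ((Commute.refl J).smul_left _).smul_right _
      have h1 : exp ((t - s) • J) = 1 := by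
        refine (isUnit_exp (s • J)).mul_right_cancel ?_
        rw [← exp_add_of_commute _ _ hcomm, ← add_smul, sub_add_cancel, one_mul, hexp]
      rw [exp_eq_one_add_mul_expSubOneDiv, add_eq_left, (hS _).mul_left_eq_zero, smul_eq_zero,
        sub_eq_zero] at h1
      exact h1.resolve_right hJ
    rw [mulVec_injective_iff_isUnit.2 (hS t) (replicateCol_inj.1 hSvw)]

end Matrix

/-- The exponential map `(v,t) ↦ exp [[0,0],[v,tJ]]` of the simply connected almost Abelian
group with Lie algebra `ℝ^d ⋊_J ℝ` is injective iff the complexification of `J` has no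
nonzero purely imaginary eigenvalue. -/
theorem expMap_injective_iff (d : ℕ) (J : Matrix (Fin d) (Fin d) ℝ) (hJ : J ≠ 0) :
    Function.Injective (fun p : (Fin d → ℝ) × ℝ =>
        exp (Matrix.fromBlocks (0 : Matrix (Fin 1) (Fin 1) ℝ) 0
          (Matrix.of fun i (_ : Fin 1) => p.1 i) (p.2 • J))) ↔
      ¬∃ z ∈ spectrum ℂ (J.map Complex.ofReal), z ≠ 0 ∧ z.re = 0 := by
  refine (Matrix.injective_exp_fromBlocks_iff hJ).trans ?_
  rw [← Matrix.forall_isUnit_expSubOneDiv_ofReal_smul_iff]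
  refine forall_congr' fun t => ?_
  rw [← Matrix.isUnit_expSubOneDiv_map_ofReal_iff, Matrix.map_smul' _ _ _ Complex.ofReal_mul]
end
end

section
/- Let J be a real d×d matrix whose complexification has a nonzero purely imaginary eigenvalue. Let L(J) be the real vector space of (d+1)×(d+1) real matrices of the form fromBlocks [[0,0],[v, t·J]] with v ∈ ℝ^d, t ∈ ℝ, and let E be the real vector space of 3×3 real matrices of the form fromBlocks [[0,0],[w, s·R]] with w ∈ ℝ², s ∈ ℝ, where R = [[0,−1],[1,0]]. Then there exists a 3-dimensional real subspace L ⊆ L(J) that is closed under the matrix commutator ⁅A,B⁆ = A·B − B·A, together with a real-linear bijection φ : E → L satisfying φ(⁅X,Y⁆) = ⁅φ(X),φ(Y)⁆ for all X,Y ∈ E. -/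
/-!
An eigenvector `u + i w` of `J` for the eigenvalue `i b`, `b ≠ 0`, gives `J u = -b w` and
`J w = b u`, i.e. the matrix `P = [w | u]` satisfies `b⁻¹ J P = P R`. Its kernel is
`R`-invariant, and `R` has no real eigenvector, so `P` is injective. Any such intertwiner makes
`(v, t) ↦ (P v, b⁻¹ t)` a bracket-preserving injection from the coordinates of `ℝ² ⋊_R ℝ` into
those of `ℝ^d ⋊_J ℝ`. Its image is the subalgebra `L`, and `φ` extends it to all `3 × 3`
matrices through a linear left inverse of the coordinate map of `E`.
-/

open scoped Matrix
open NormedSpace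

noncomputable section

/-- The rotation generator `R = [[0,-1],[1,0]]`. -/
def rotGen : Matrix (Fin 2) (Fin 2) ℝ := !![0, -1; 1, 0]

/-- The Lie algebra of the Euclidean motion group `E(2)`: the 3×3 real matrices of the form
`fromBlocks [[0,0],[w, s·R]]` with `w ∈ ℝ²`, `s ∈ ℝ`. -/
def eucAlg : Set (Matrix (Fin 1 ⊕ Fin 2) (Fin 1 ⊕ Fin 2) ℝ) :=
  {M | ∃ (w : Fin 2 → ℝ) (s : ℝ),
    M = Matrix.fromBlocks 0 0 (Matrix.of fun i (_ : Fin 1) => w i) (s • rotGen)}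

/-- The almost Abelian Lie algebra `ℝ^d ⋊_J ℝ` in its faithful matrix representation:
the `(d+1)×(d+1)` real matrices `fromBlocks [[0,0],[v, t·J]]`. -/
def LJset (d : ℕ) (J : Matrix (Fin d) (Fin d) ℝ) :
    Set (Matrix (Fin 1 ⊕ Fin d) (Fin 1 ⊕ Fin d) ℝ) :=
  {M | ∃ (v : Fin d → ℝ) (t : ℝ),
    M = Matrix.fromBlocks 0 0 (Matrix.of fun i (_ : Fin 1) => v i) (t • J)}

open Matrix

section AlmostAbelian

variable {𝕜 : Type*} [Field 𝕜] {m n : Type*}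

def semidirectEmbed (K : Matrix n n 𝕜) :
    (n → 𝕜) × 𝕜 →ₗ[𝕜] Matrix (Fin 1 ⊕ n) (Fin 1 ⊕ n) 𝕜 where
  toFun p := fromBlocks 0 0 (replicateCol (Fin 1) p.1) (p.2 • K)
  map_add' p q := by simp [add_smul, replicateCol_add, fromBlocks_add]
  map_smul' c p := by simp [smul_smul, replicateCol_smul, fromBlocks_smul]

theorem semidirectEmbed_injective {K : Matrix n n 𝕜} (hK : K ≠ 0) :
    Function.Injective (semidirectEmbed K) := by
  rintro ⟨v, t⟩ ⟨v', t'⟩ h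
  obtain ⟨-, -, hv, ht⟩ := fromBlocks_inj.mp h
  exact Prod.ext (replicateCol_inj.mp hv) (smul_left_injective 𝕜 hK ht)

variable [Fintype m]

def semidirectHom (P : Matrix n m 𝕜) (c : 𝕜) : (m → 𝕜) × 𝕜 →ₗ[𝕜] (n → 𝕜) × 𝕜 :=
  P.mulVecLin.prodMap (c • LinearMap.id)

theorem semidirectHom_injective {P : Matrix n m 𝕜} (hP : Function.Injective P.mulVec) {c : 𝕜}
    (hc : c ≠ 0) : Function.Injective (semidirectHom P c) := by
  rw [semidirectHom, LinearMap.coe_prodMap]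
  exact hP.prodMap (smul_right_injective 𝕜 hc)

variable [Fintype n]

def semidirectBracket (K : Matrix n n 𝕜) (p q : (n → 𝕜) × 𝕜) : (n → 𝕜) × 𝕜 :=
  (p.2 • (K *ᵥ q.1) - q.2 • (K *ᵥ p.1), 0)

theorem semidirectEmbed_commutator (K : Matrix n n 𝕜) (p q : (n → 𝕜) × 𝕜) :
    semidirectEmbed K p * semidirectEmbed K q - semidirectEmbed K q * semidirectEmbed K p =
      semidirectEmbed K (semidirectBracket K p q) := by
  ext (i | i) (j | j) <;>
    simp [semidirectEmbed, semidirectBracket, fromBlocks_multiply, ← replicateCol_mulVec,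
      smul_mul_smul_comm, mul_comm p.2, smul_mulVec]

theorem semidirectBracket_semidirectHom {J : Matrix n n 𝕜} {K : Matrix m m 𝕜}
    {P : Matrix n m 𝕜} {c : 𝕜} (hP : c • (J * P) = P * K) (p q : (m → 𝕜) × 𝕜) :
    semidirectBracket J (semidirectHom P c p) (semidirectHom P c q) =
      semidirectHom P c (semidirectBracket K p q) := by
  simp [semidirectHom, semidirectBracket, mulVec_sub, mulVec_smul, mulVec_mulVec, ← hP,
    smul_mulVec, smul_smul, mul_comm c]

end AlmostAbelian

theorem LinearMap.exists_bijOn_range_of_injective {K V M₁ M₂ : Type*} [Field K] [AddCommGroup V]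
    [Module K V] [AddCommGroup M₁] [Module K M₁] [AddCommGroup M₂] [Module K M₂]
    {e : V →ₗ[K] M₁} {F : V →ₗ[K] M₂} (he : Function.Injective e)
    (hF : Function.Injective F) :
    ∃ φ : M₁ →ₗ[K] M₂, Set.BijOn φ (Set.range e) (Set.range F) ∧ ∀ v, φ (e v) = F v := by
  obtain ⟨g, hg⟩ := e.exists_leftInverse_of_injective (LinearMap.ker_eq_bot.mpr he)
  have hφ (v : V) : (F ∘ₗ g) (e v) = F v := by
    rw [LinearMap.comp_apply, ← LinearMap.comp_apply g, hg, LinearMap.id_apply]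
  refine ⟨F ∘ₗ g, ⟨?_, ?_, ?_⟩, hφ⟩
  · rintro _ ⟨v, rfl⟩
    exact ⟨v, (hφ v).symm⟩
  · rintro _ ⟨v, rfl⟩ _ ⟨w, rfl⟩ h
    rw [hφ, hφ] at h
    rw [hF h]
  · rintro _ ⟨v, rfl⟩
    exact ⟨e v, ⟨v, rfl⟩, hφ v⟩

theorem rotGen_ne_zero : rotGen ≠ 0 := by
  intro h
  simpa [rotGen] using congrFun (congrFun h 1) 0

theorem rotGen_mulVec (a : Fin 2 → ℝ) : rotGen *ᵥ a = ![-a 1, a 0] := by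
  ext i
  fin_cases i <;> simp [rotGen, mulVec, dotProduct, Fin.sum_univ_two]

section RotationPair

variable {m n : Type*}

def rotationPair (u w : n → ℝ) : Matrix n (Fin 2) ℝ := (of ![w, u])ᵀ

theorem rotationPair_mulVec (u w : n → ℝ) (a : Fin 2 → ℝ) :
    rotationPair u w *ᵥ a = a 0 • w + a 1 • u := by
  ext i
  simp [rotationPair, mulVec, dotProduct, Fin.sum_univ_two, mul_comm]

variable [Fintype n]

theorem re_map_ofReal_mulVec (A : Matrix m n ℝ) (x : n → ℂ) (i : m) :
    (((A.map Complex.ofReal) *ᵥ x) i).re = (A *ᵥ fun j => (x j).re) i := by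
  simp [mulVec, dotProduct, Complex.re_sum]

theorem im_map_ofReal_mulVec (A : Matrix m n ℝ) (x : n → ℂ) (i : m) :
    (((A.map Complex.ofReal) *ᵥ x) i).im = (A *ᵥ fun j => (x j).im) i := by
  simp [mulVec, dotProduct, Complex.im_sum]

theorem exists_rotationPair [DecidableEq n] {J : Matrix n n ℝ}
    (h : ∃ z ∈ spectrum ℂ (J.map Complex.ofReal), z ≠ 0 ∧ z.re = 0) :
    ∃ (b : ℝ) (u w : n → ℝ), b ≠ 0 ∧ (u, w) ≠ 0 ∧ J *ᵥ u = -b • w ∧ J *ᵥ w = b • u := by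
  obtain ⟨z, hz, hz0, hzre⟩ := h
  rw [← spectrum_toLin', ← Module.End.hasEigenvalue_iff_mem_spectrum] at hz
  obtain ⟨x, hx, hx0⟩ := hz.exists_hasEigenvector
  rw [Module.End.mem_eigenspace_iff, toLin'_apply] at hx
  have hz : z = z.im * Complex.I := Complex.ext (by simp [hzre]) (by simp)
  refine ⟨z.im, fun i => (x i).re, fun i => (x i).im, fun h0 => hz0 (Complex.ext hzre h0),
    ?_, ?_, ?_⟩
  · intro h0
    obtain ⟨hre, him⟩ := Prod.mk_eq_zero.mp h0
    exact hx0 (funext fun i => Complex.ext (congrFun hre i) (congrFun him i))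
  · funext i
    rw [← re_map_ofReal_mulVec, hx, hz]
    simp
  · funext i
    rw [← im_map_ofReal_mulVec, hx, hz]
    simp

theorem inv_smul_mul_rotationPair {J : Matrix n n ℝ} {b : ℝ} {u w : n → ℝ} (hb : b ≠ 0)
    (hu : J *ᵥ u = -b • w) (hw : J *ᵥ w = b • u) :
    b⁻¹ • (J * rotationPair u w) = rotationPair u w * rotGen := by
  ext i j
  have hui := congrFun hu i
  have hwi := congrFun hw i
  simp only [mulVec, dotProduct, Pi.smul_apply, smul_eq_mul] at hui hwi
  fin_cases j <;> simp [rotationPair, mul_apply, rotGen, Fin.sum_univ_two, hui, hwi, hb]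

theorem injective_mulVec_rotationPair {J : Matrix n n ℝ} {b : ℝ} {u w : n → ℝ}
    (huw : (u, w) ≠ 0) (hP : b⁻¹ • (J * rotationPair u w) = rotationPair u w * rotGen) :
    Function.Injective (rotationPair u w).mulVec := by
  refine (injective_iff_map_eq_zero (rotationPair u w).mulVecLin).mpr fun a ha => ?_
  change rotationPair u w *ᵥ a = 0 at ha
  have hRa : rotationPair u w *ᵥ (rotGen *ᵥ a) = 0 := by
    rw [mulVec_mulVec, ← hP, smul_mulVec, ← mulVec_mulVec, ha, mulVec_zero, smul_zero]
  rw [rotationPair_mulVec] at ha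
  rw [rotGen_mulVec, rotationPair_mulVec] at hRa
  simp only [Matrix.cons_val_zero, Matrix.cons_val_one] at hRa
  have hnorm : a 0 ^ 2 + a 1 ^ 2 = 0 := by
    by_contra hs
    refine huw (Prod.ext (smul_eq_zero.mp ?_ |>.resolve_left hs)
      (smul_eq_zero.mp ?_ |>.resolve_left hs))
    · linear_combination (norm := module) a 1 • ha + a 0 • hRa
    · linear_combination (norm := module) a 0 • ha - a 1 • hRa
  have h0 : a 0 = 0 := by nlinarith
  have h1 : a 1 = 0 := by nlinarith
  ext i
  fin_cases i <;> simp [h0, h1]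

theorem ne_zero_of_rotationPair {J : Matrix n n ℝ} {b : ℝ} {u w : n → ℝ} (hb : b ≠ 0)
    (huw : (u, w) ≠ 0) (hu : J *ᵥ u = -b • w) (hw : J *ᵥ w = b • u) : J ≠ 0 := by
  rintro rfl
  rw [zero_mulVec, eq_comm, smul_eq_zero] at hu hw
  exact huw (Prod.ext (hw.resolve_left hb) (hu.resolve_left (neg_ne_zero.mpr hb)))

end RotationPair

theorem range_semidirectEmbed_rotGen : Set.range (semidirectEmbed rotGen) = eucAlg := by
  ext M
  constructor
  · rintro ⟨⟨w, s⟩, rfl⟩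
    exact ⟨w, s, rfl⟩
  · rintro ⟨w, s, rfl⟩
    exact ⟨(w, s), rfl⟩

theorem range_semidirectEmbed (d : ℕ) (J : Matrix (Fin d) (Fin d) ℝ) :
    Set.range (semidirectEmbed J) = LJset d J := by
  ext M
  constructor
  · rintro ⟨⟨v, t⟩, rfl⟩
    exact ⟨v, t, rfl⟩
  · rintro ⟨v, t, rfl⟩
    exact ⟨(v, t), rfl⟩

/-- If the complexification of `J` has a nonzero purely imaginary eigenvalue then the almost
Abelian algebra `L(J)` contains a 3-dimensional subalgebra isomorphic (as a Lie algebra, via a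
bracket-preserving real-linear bijection) to the Lie algebra of `E(2)`. -/
theorem exists_e2_subalgebra (d : ℕ) (J : Matrix (Fin d) (Fin d) ℝ)
    (h : ∃ z ∈ spectrum ℂ (J.map Complex.ofReal), z ≠ 0 ∧ z.re = 0) :
    ∃ L : Submodule ℝ (Matrix (Fin 1 ⊕ Fin d) (Fin 1 ⊕ Fin d) ℝ),
      (L : Set (Matrix (Fin 1 ⊕ Fin d) (Fin 1 ⊕ Fin d) ℝ)) ⊆ LJset d J ∧
      Module.finrank ℝ L = 3 ∧
      (∀ A ∈ L, ∀ B ∈ L, A * B - B * A ∈ L) ∧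
      ∃ φ : Matrix (Fin 1 ⊕ Fin 2) (Fin 1 ⊕ Fin 2) ℝ →ₗ[ℝ]
          Matrix (Fin 1 ⊕ Fin d) (Fin 1 ⊕ Fin d) ℝ,
        Set.BijOn φ eucAlg (L : Set (Matrix (Fin 1 ⊕ Fin d) (Fin 1 ⊕ Fin d) ℝ)) ∧
        ∀ X ∈ eucAlg, ∀ Y ∈ eucAlg, φ (X * Y - Y * X) = φ X * φ Y - φ Y * φ X := by
  obtain ⟨b, u, w, hb, huw, hu, hw⟩ := exists_rotationPair h
  have hJ := ne_zero_of_rotationPair hb huw hu hw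
  have hP := inv_smul_mul_rotationPair hb hu hw
  set F := semidirectEmbed J ∘ₗ semidirectHom (rotationPair u w) b⁻¹
  have hF : Function.Injective F := (semidirectEmbed_injective hJ).comp
    (semidirectHom_injective (injective_mulVec_rotationPair huw hP) (inv_ne_zero hb))
  have hF_commutator (p q) : F p * F q - F q * F p = F (semidirectBracket rotGen p q) := by
    simp only [F, LinearMap.comp_apply, semidirectEmbed_commutator,
      semidirectBracket_semidirectHom hP]
  obtain ⟨φ, hφ, hφF⟩ :=
    LinearMap.exists_bijOn_range_of_injective (semidirectEmbed_injective rotGen_ne_zero) hF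
  rw [← range_semidirectEmbed_rotGen]
  refine ⟨LinearMap.range F, ?_, ?_, ?_, φ, by rwa [LinearMap.coe_range], ?_⟩
  · rw [LinearMap.coe_range, ← range_semidirectEmbed]
    rintro _ ⟨p, rfl⟩
    exact ⟨_, rfl⟩
  · rw [LinearMap.finrank_range_of_inj hF]
    simp
  · rintro _ ⟨p, rfl⟩ _ ⟨q, rfl⟩
    exact ⟨_, (hF_commutator p q).symm⟩
  · rintro _ ⟨p, rfl⟩ _ ⟨q, rfl⟩
    rw [semidirectEmbed_commutator, hφF, hφF, hφF, hF_commutator]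
end
end

section
/- Let J be a nonzero real d×d matrix. There exists t ≠ 0 with exp(t·J) = 1 (the identity matrix) if and only if the complexification of J is diagonalizable (i.e. there exist an invertible complex matrix P and a diagonal complex matrix D with Jℂ = P·D·P⁻¹) and there exists ω > 0 such that every eigenvalue of the complexification of J lies in iωℤ = {iωm : m ∈ ℤ}. -/
/-!
If `exp A = 1` and `B = A - μ` kills `v` after `k` steps, then `exp B = e^{-μ}` is scalar. On a
vector `u` with `B² u = 0` the exponential series stops after two terms, so `u + B u = e^{-μ} u`;
applying `B` once more shows `B u = 0`. Descending in `k`, every generalized eigenvector of `A` is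
an eigenvector, so over `ℂ` the matrix `A` is diagonalizable, and then `exp A = 1` says exactly
that every eigenvalue lies in `2πiℤ`. For `A = t • J` this puts the spectrum of `J` in `iωℤ`
with `ω = 2π / |t|`, and conversely `t = 2π / ω` works.
-/

open scoped Matrix
open NormedSpace

namespace Matrix

variable {n K : Type*} [Fintype n] [DecidableEq n] [Field K]

def IsDiagonalizable (A : Matrix n n K) : Prop :=
  ∃ P D : Matrix n n K, IsUnit P ∧ D.IsDiag ∧ A = P * D * P⁻¹

theorem IsDiagonalizable.smul {A : Matrix n n K} (hA : A.IsDiagonalizable) (c : K) :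
    (c • A).IsDiagonalizable := by
  obtain ⟨P, D, hP, hD, rfl⟩ := hA
  exact ⟨P, c • D, hP, hD.smul c, by rw [Matrix.mul_smul, Matrix.smul_mul]⟩

theorem isDiagonalizable_smul_iff {A : Matrix n n K} {c : K} (hc : c ≠ 0) :
    (c • A).IsDiagonalizable ↔ A.IsDiagonalizable :=
  ⟨fun h => by simpa [smul_smul, inv_mul_cancel₀ hc] using h.smul c⁻¹, fun h => h.smul c⟩

theorem spectrum_conj {P : Matrix n n K} (hP : IsUnit P) (A : Matrix n n K) :
    spectrum K (P * A * P⁻¹) = spectrum K A := by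
  obtain ⟨u, rfl⟩ := hP
  rw [← Matrix.coe_units_inv, spectrum.units_conjugate]

theorem IsDiagonalizable.exists_diagonal {A : Matrix n n K} (hA : A.IsDiagonalizable) :
    ∃ P : Matrix n n K, ∃ d : n → K, IsUnit P ∧ (∀ i, d i ∈ spectrum K A) ∧
      A = P * diagonal d * P⁻¹ := by
  obtain ⟨P, D, hP, hD, rfl⟩ := hA
  refine ⟨P, D.diag, hP, fun i => ?_, by rw [hD.diagonal_diag]⟩
  rw [spectrum_conj hP, ← hD.diagonal_diag, spectrum_diagonal]
  exact ⟨i, by simp⟩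

theorem isDiagonalizable_of_iSup_eigenspace_eq_top {A : Matrix n n K}
    (hA : ⨆ μ, Module.End.eigenspace (toLin' A) μ = ⊤) : A.IsDiagonalizable := by
  classical
  set f : Module.End K (n → K) := toLin' A
  have hint : DirectSum.IsInternal f.eigenspace :=
    (DirectSum.isInternal_submodule_iff_iSupIndep_and_iSup_eq_top _).2
      ⟨f.eigenspaces_iSupIndep, hA⟩
  let bC := hint.collectedBasis fun μ => Module.Basis.ofVectorSpace K (f.eigenspace μ)
  let e := bC.indexEquiv (Pi.basisFun K n)
  let b := bC.reindex e
  let μs : n → K := fun i => (e.symm i).1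
  have hb : ∀ i, A *ᵥ b i = μs i • b i := fun i => by
    have hmem := hint.collectedBasis_mem
      (fun μ => Module.Basis.ofVectorSpace K (f.eigenspace μ)) (e.symm i)
    rw [Module.End.mem_eigenspace_iff] at hmem
    rwa [bC.reindex_apply e i]
  let P := (Pi.basisFun K n).toMatrix b
  have hP : IsUnit P := by
    have := (Pi.basisFun K n).invertibleToMatrix b
    exact isUnit_of_invertible P
  have hPe : ∀ l j, P l j = b j l := fun l j => by
    simp [P, Module.Basis.toMatrix_apply, Pi.basisFun_repr]
  have hAP : A * P = P * diagonal μs := by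
    ext i j
    calc (A * P) i j = (A *ᵥ b j) i := by simp [mul_apply, mulVec, dotProduct, hPe]
      _ = (P * diagonal μs) i j := by
        rw [hb j, mul_diagonal, hPe, Pi.smul_apply, smul_eq_mul, mul_comm]
  refine ⟨P, diagonal μs, hP, isDiag_diagonal μs, ?_⟩
  rw [← hAP, Matrix.mul_nonsing_inv_cancel_right _ _ ((isUnit_iff_isUnit_det P).1 hP)]

section Exp

open Finset
open scoped Nat

variable {𝕜 : Type*} [RCLike 𝕜]

/- The matrix exponential needs no norm, but the Banach-algebra facts about `exp` do: the next
three lemmas borrow the operator norm only inside their proofs. -/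
theorem hasSum_exp_series (B : Matrix n n 𝕜) :
    HasSum (fun i => (i !⁻¹ : 𝕜) • B ^ i) (exp B) := by
  open scoped Norms.Operator in exact exp_series_hasSum_exp' B

theorem exp_mem_spectrum_exp {A : Matrix n n 𝕜} {z : 𝕜} (hz : z ∈ spectrum 𝕜 A) :
    exp z ∈ spectrum 𝕜 (exp A) := by
  open scoped Norms.Operator in exact spectrum.exp_mem_exp A hz

theorem exp_map_ofReal (M : Matrix n n ℝ) :
    (exp M).map Complex.ofReal = exp (M.map Complex.ofReal) := by
  open scoped Norms.Operator in
  exact map_exp Complex.ofRealHom.mapMatrix (continuous_id.matrix_map Complex.continuous_ofReal) M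

theorem exp_map_ofReal_eq_one_iff (M : Matrix n n ℝ) :
    exp (M.map Complex.ofReal) = 1 ↔ exp M = 1 := by
  rw [← exp_map_ofReal, ← Matrix.map_one Complex.ofReal Complex.ofReal_zero Complex.ofReal_one,
    (map_injective Complex.ofReal_injective).eq_iff]

theorem exp_mulVec_eq_sum_of_pow_mulVec_eq_zero {B : Matrix n n 𝕜} {v : n → 𝕜} {k : ℕ}
    (hv : (B ^ k) *ᵥ v = 0) :
    exp B *ᵥ v = ∑ i ∈ range k, (i !⁻¹ : 𝕜) • ((B ^ i) *ᵥ v) := by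
  have hsum : HasSum (fun i => (i !⁻¹ : 𝕜) • ((B ^ i) *ᵥ v)) (exp B *ᵥ v) := by
    simpa only [Function.comp_def, mulVec.addMonoidHomLeft, AddMonoidHom.coe_mk, ZeroHom.coe_mk,
      smul_mulVec] using (hasSum_exp_series B).map (mulVec.addMonoidHomLeft v)
        (continuous_id.matrix_mulVec continuous_const)
  refine hsum.unique (hasSum_sum_of_ne_finset_zero fun i hi => ?_)
  obtain ⟨j, rfl⟩ := Nat.exists_eq_add_of_le (not_lt.mp (mem_range.not.mp hi))
  rw [add_comm, pow_add, ← mulVec_mulVec, hv, mulVec_zero, smul_zero]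

theorem mulVec_eq_zero_of_exp_eq_smul_one {B : Matrix n n 𝕜} {c : 𝕜} (hB : exp B = c • 1)
    {v : n → 𝕜} {k : ℕ} (hv : (B ^ k) *ᵥ v = 0) : B *ᵥ v = 0 := by
  have key : ∀ u : n → 𝕜, (B ^ 2) *ᵥ u = 0 → B *ᵥ u = 0 := by
    intro u hu
    have hBu : B *ᵥ u = (c - 1) • u := by
      have h := exp_mulVec_eq_sum_of_pow_mulVec_eq_zero hu
      simp [hB, sum_range_succ, smul_mulVec] at h
      rw [sub_smul, one_smul, h, add_sub_cancel_left]
    have hu' : (c - 1) • (c - 1) • u = 0 := by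
      rw [← hBu, ← mulVec_smul, ← hBu, mulVec_mulVec, ← sq, hu]
    rw [hBu]
    rcases smul_eq_zero.mp hu' with h | h
    · rw [h, zero_smul]
    · exact h
  induction k with
  | zero => simp_all
  | succ k ih =>
    rcases k with _ | k
    · simpa using hv
    · refine ih ?_
      rw [pow_succ', ← mulVec_mulVec]
      exact key _ (by rwa [mulVec_mulVec, ← pow_add, show 2 + k = k + 1 + 1 by omega])

theorem exp_sub_smul_one (A : Matrix n n 𝕜) (μ : 𝕜) :
    exp (A - μ • 1) = exp (-μ) • exp A := by
  rw [sub_eq_neg_add, ← neg_smul, exp_add_of_commute _ _ ((Commute.one_left A).smul_left _),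
    smul_one_eq_diagonal, exp_diagonal]
  ext i j
  simp [Pi.exp_def, diagonal_mul]

theorem maxGenEigenspace_toLin'_eq_eigenspace_of_exp_eq_one {A : Matrix n n 𝕜} (hA : exp A = 1)
    (μ : 𝕜) :
    Module.End.maxGenEigenspace (toLin' A) μ = Module.End.eigenspace (toLin' A) μ := by
  refine le_antisymm (fun v hv => ?_) Module.End.eigenspace_le_maxGenEigenspace
  obtain ⟨k, hk⟩ := (Module.End.mem_maxGenEigenspace _ _ _).mp hv
  have hB : exp (A - μ • 1) = exp (-μ) • 1 := by rw [exp_sub_smul_one, hA]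
  have hkB : ((A - μ • 1) ^ k) *ᵥ v = 0 := by
    have hlin : toLinAlgEquiv' ((A - μ • 1) ^ k) = (toLin' A - μ • 1) ^ k := by
      rw [map_pow, map_sub, map_smul, map_one]; rfl
    rw [← toLinAlgEquiv'_apply, hlin, hk]
  have := mulVec_eq_zero_of_exp_eq_smul_one hB hkB
  rw [Module.End.mem_eigenspace_iff, toLin'_apply, ← sub_eq_zero, ← this, sub_mulVec,
    smul_mulVec, one_mulVec]

theorem isDiagonalizable_of_exp_eq_one {A : Matrix n n ℂ} (hA : exp A = 1) :
    A.IsDiagonalizable := by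
  apply isDiagonalizable_of_iSup_eigenspace_eq_top
  simp_rw [← maxGenEigenspace_toLin'_eq_eigenspace_of_exp_eq_one hA]
  exact Module.End.iSup_maxGenEigenspace_eq_top _

theorem exp_eq_one_of_mem_spectrum {A : Matrix n n 𝕜} (hA : exp A = 1) {z : 𝕜}
    (hz : z ∈ spectrum 𝕜 A) : exp z = 1 := by
  rcases isEmpty_or_nonempty n with hn | hn
  · simp [spectrum.of_subsingleton] at hz
  · simpa [hA, spectrum.one_eq] using exp_mem_spectrum_exp hz

theorem exp_eq_one_of_isDiagonalizable {A : Matrix n n 𝕜} (hA : A.IsDiagonalizable)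
    (h : ∀ z ∈ spectrum 𝕜 A, exp z = 1) : exp A = 1 := by
  obtain ⟨P, d, hP, hd, rfl⟩ := hA.exists_diagonal
  have hexp : exp d = 1 := funext fun i => by simpa [Pi.exp_def] using h _ (hd i)
  rw [exp_conj _ _ hP, exp_diagonal, hexp, Pi.one_def, diagonal_one, mul_one,
    mul_nonsing_inv _ ((isUnit_iff_isUnit_det P).1 hP)]

theorem exp_eq_one_iff {A : Matrix n n ℂ} :
    exp A = 1 ↔ A.IsDiagonalizable ∧ ∀ z ∈ spectrum ℂ A, exp z = 1 :=
  ⟨fun hA => ⟨isDiagonalizable_of_exp_eq_one hA, fun _ => exp_eq_one_of_mem_spectrum hA⟩,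
    fun h => exp_eq_one_of_isDiagonalizable h.1 h.2⟩

end Exp

end Matrix

theorem forall_mem_spectrum_smul_iff {K A : Type*} [Field K] [Ring A] [Algebra K A] {a : A}
    {c : K} (hc : c ≠ 0) {p : K → Prop} :
    (∀ z ∈ spectrum K (c • a), p z) ↔ ∀ z ∈ spectrum K a, p (c * z) := by
  rw [show c • a = Units.mk0 c hc • a from rfl, spectrum.unit_smul_eq_smul, ← Set.image_smul,
    Set.forall_mem_image]
  rfl

open scoped Real in
theorem exp_ofReal_mul_eq_one_iff {t : ℝ} (ht : t ≠ 0) {z : ℂ} :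
    Complex.exp (t * z) = 1 ↔ ∃ m : ℤ, z = Complex.I * (2 * π / t : ℝ) * m := by
  have ht' : (t : ℂ) ≠ 0 := Complex.ofReal_ne_zero.mpr ht
  rw [Complex.exp_eq_one_iff]
  refine exists_congr fun m => ?_
  push_cast
  constructor <;> intro h
  · field_simp at h ⊢
    linear_combination h
  · rw [h]; field_simp

open scoped Real in
theorem exists_ne_zero_forall_exp_mul_eq_one_iff (S : Set ℂ) :
    (∃ t : ℝ, t ≠ 0 ∧ ∀ z ∈ S, Complex.exp (t * z) = 1) ↔
      ∃ ω : ℝ, 0 < ω ∧ ∀ z ∈ S, ∃ m : ℤ, z = Complex.I * ω * m := by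
  constructor
  · rintro ⟨t, ht, hS⟩
    have habs : ∀ z ∈ S, Complex.exp (|t| * z) = 1 := fun z hz => by
      rcases abs_choice t with h | h <;> simp [h, Complex.exp_neg, hS z hz]
    exact ⟨2 * π / |t|, by positivity, fun z hz =>
      (exp_ofReal_mul_eq_one_iff (abs_ne_zero.mpr ht)).mp (habs z hz)⟩
  · rintro ⟨ω, hω, hS⟩
    have ht : 2 * π / ω ≠ 0 := by positivity
    refine ⟨2 * π / ω, ht, fun z hz => (exp_ofReal_mul_eq_one_iff ht).mpr ?_⟩
    rw [div_div_cancel₀ (by positivity)]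
    exact hS z hz

theorem exists_exp_smul_eq_one_iff_general (d : ℕ) (J : Matrix (Fin d) (Fin d) ℝ) :
    (∃ t : ℝ, t ≠ 0 ∧ exp (t • J) = 1) ↔
      ((∃ P D : Matrix (Fin d) (Fin d) ℂ, IsUnit P ∧ D.IsDiag ∧
          J.map Complex.ofReal = P * D * P⁻¹) ∧
        ∃ ω : ℝ, 0 < ω ∧ ∀ z ∈ spectrum ℂ (J.map Complex.ofReal),
          ∃ m : ℤ, z = Complex.I * ω * m) := by
  set Jc := J.map Complex.ofReal
  have key : ∀ t : ℝ, t ≠ 0 → (exp (t • J) = 1 ↔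
      Jc.IsDiagonalizable ∧ ∀ z ∈ spectrum ℂ Jc, Complex.exp (t * z) = 1) := fun t ht => by
    have ht' : (t : ℂ) ≠ 0 := Complex.ofReal_ne_zero.mpr ht
    rw [← Matrix.exp_map_ofReal_eq_one_iff, Matrix.map_smul' _ _ _ Complex.ofReal_mul,
      Matrix.exp_eq_one_iff, Matrix.isDiagonalizable_smul_iff ht',
      forall_mem_spectrum_smul_iff ht', Complex.exp_eq_exp_ℂ]
  rw [← exists_ne_zero_forall_exp_mul_eq_one_iff]
  constructor
  · rintro ⟨t, ht, h⟩
    exact ⟨((key t ht).mp h).1, t, ht, ((key t ht).mp h).2⟩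
  · rintro ⟨hJc, t, ht, h⟩
    exact ⟨t, ht, (key t ht).mpr ⟨hJc, h⟩⟩

/-- `exp(tJ) = 1` for some `t ≠ 0` iff the complexification of `J` is diagonalizable and all
its eigenvalues lie in `iωℤ` for some `ω > 0`. -/
theorem exists_exp_smul_eq_one_iff (d : ℕ) (J : Matrix (Fin d) (Fin d) ℝ) (hJ : J ≠ 0) :
    (∃ t : ℝ, t ≠ 0 ∧ exp (t • J) = 1) ↔
      ((∃ P D : Matrix (Fin d) (Fin d) ℂ, IsUnit P ∧ D.IsDiag ∧
          J.map Complex.ofReal = P * D * P⁻¹) ∧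
        ∃ ω : ℝ, 0 < ω ∧ ∀ z ∈ spectrum ℂ (J.map Complex.ofReal),
          ∃ m : ℤ, z = Complex.I * ω * m) :=
  exists_exp_smul_eq_one_iff_general d J
end

section
/- Let J be a nonzero real d×d matrix whose complexification is diagonalizable, and suppose ω₀ > 0 is such that every eigenvalue of the complexification of J lies in iω₀ℤ and ω₀ is maximal with this property (i.e. for every ω > ω₀ some eigenvalue is not in iωℤ). Then {t ∈ ℝ : exp(t·J) = 1} = (2π/ω₀)·ℤ. -/
/-!
Conjugating a diagonalisation of `J` over `ℂ`, `exp (t • J) = 1` holds iff `exp (t λ) = 1` for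
every eigenvalue `λ = i ω₀ m`, i.e. iff `s := t ω₀ / 2π` satisfies `s m ∈ ℤ` for all these `m`.
The integers `m` with `s m ∈ ℤ` form a subgroup of `ℤ`; if `s ∉ ℤ` it misses `1`, so it lies in
`p ℤ` for some prime `p`, and then every eigenvalue lies in `i (p ω₀) ℤ`, contradicting the
maximality of `ω₀`.
-/

open scoped Matrix
open NormedSpace

open Complex Real in
theorem Complex.exp_ofReal_mul_two_pi_I_eq_one_iff (x : ℝ) :
    exp (x * (2 * π * I)) = 1 ↔ ∃ n : ℤ, x = n := by
  rw [exp_eq_one_iff]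
  refine exists_congr fun n => ?_
  rw [mul_left_inj' two_pi_I_ne_zero]
  exact_mod_cast Iff.rfl

theorem Int.exists_prime_and_le_zmultiples {H : AddSubgroup ℤ} (h : (1 : ℤ) ∉ H) :
    ∃ p : ℕ, p.Prime ∧ H ≤ AddSubgroup.zmultiples (p : ℤ) := by
  obtain ⟨g, rfl⟩ := Int.subgroup_cyclic H
  rw [← AddSubgroup.zmultiples_eq_closure, Int.mem_zmultiples_iff, ← isUnit_iff_dvd_one,
    Int.isUnit_iff_natAbs_eq] at h
  obtain ⟨p, hp, hpg⟩ := Nat.exists_prime_and_dvd h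
  refine ⟨p, hp, ?_⟩
  rw [← AddSubgroup.zmultiples_eq_closure, AddSubgroup.zmultiples_le, Int.mem_zmultiples_iff]
  exact Int.natCast_dvd.mpr hpg

open Complex Real in
theorem Complex.forall_exp_ofReal_mul_eq_one_iff_of_maximal {S : Set ℂ} {ω₀ : ℝ} (hω₀ : 0 < ω₀)
    (hS : ∀ z ∈ S, ∃ m : ℤ, z = I * ω₀ * m)
    (hmax : ∀ ω : ℝ, ω₀ < ω → ∃ z ∈ S, ∀ m : ℤ, z ≠ I * ω * m) (t : ℝ) :
    (∀ z ∈ S, exp (t * z) = 1) ↔ ∃ k : ℤ, t = 2 * π / ω₀ * k := by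
  obtain ⟨s, rfl⟩ : ∃ s : ℝ, t = 2 * π / ω₀ * s := ⟨t * ω₀ / (2 * π), by field_simp⟩
  have hperiod : 2 * π / ω₀ ≠ 0 := by positivity
  simp_rw [mul_right_inj' hperiod]
  have hexp_iff (m : ℤ) : exp (↑(2 * π / ω₀ * s) * (I * ω₀ * m)) = 1 ↔ ∃ n : ℤ, s * m = n := by
    have hω₀' : (ω₀ : ℂ) ≠ 0 := ofReal_ne_zero.mpr hω₀.ne'
    rw [← exp_ofReal_mul_two_pi_I_eq_one_iff]
    congr! 2
    push_cast
    field_simp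
  constructor
  · intro h
    by_contra hs_int
    let H : AddSubgroup ℤ :=
      (Int.castAddHom ℝ).range.comap ((AddMonoidHom.mulLeft s).comp (Int.castAddHom ℝ))
    have hmemH (m : ℤ) : m ∈ H ↔ ∃ n : ℤ, s * m = n := by
      simp [H, AddSubgroup.mem_zmultiples_iff, eq_comm]
    obtain ⟨p, hp, hHp⟩ :=
      Int.exists_prime_and_le_zmultiples (H := H) (by simpa [hmemH] using hs_int)
    obtain ⟨z, hzS, hz⟩ := hmax (p * ω₀) (lt_mul_left hω₀ (by exact_mod_cast hp.one_lt))
    obtain ⟨m, rfl⟩ := hS z hzS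
    obtain ⟨c, rfl⟩ := Int.mem_zmultiples_iff.mp (hHp ((hmemH m).mpr ((hexp_iff m).mp (h _ hzS))))
    exact hz c (by push_cast; ring)
  · rintro ⟨k, rfl⟩ z hz
    obtain ⟨m, rfl⟩ := hS z hz
    exact (hexp_iff m).mpr ⟨k * m, by push_cast; ring⟩

namespace Matrix

variable {m : Type*} [Fintype m] [DecidableEq m]

theorem exp_map_ofReal_s5 (A : Matrix m m ℝ) :
    exp (A.map Complex.ofReal) = (exp A).map Complex.ofReal := by
  open scoped Norms.Operator in
  exact (map_exp Complex.ofRealHom.mapMatrix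
    (continuous_id.matrix_map Complex.continuous_ofReal) A).symm

theorem exp_eq_one_iff_exp_map_ofReal_eq_one (A : Matrix m m ℝ) :
    exp A = 1 ↔ exp (A.map Complex.ofReal) = 1 := by
  rw [exp_map_ofReal_s5, ← Matrix.map_one _ Complex.ofReal_zero Complex.ofReal_one,
    (map_injective Complex.ofReal_injective).eq_iff]

theorem exp_smul_eq_one_iff_of_isDiag_conj {A P D : Matrix m m ℂ} (hP : IsUnit P)
    (hD : D.IsDiag) (hA : A = P * D * P⁻¹) (t : ℂ) :
    exp (t • A) = 1 ↔ ∀ z ∈ spectrum ℂ A, Complex.exp (t * z) = 1 := by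
  obtain ⟨u, rfl⟩ := hP
  rw [← coe_units_inv] at hA
  have hdiag : D = diagonal D.diag := hD.diagonal_diag.symm
  have hspec : spectrum ℂ A = Set.range D.diag := by
    rw [hA, spectrum.units_conjugate, ← spectrum_diagonal, ← hdiag]
  have hexp : exp (t • D) = diagonal fun i => Complex.exp (t * D.diag i) := by
    rw [hdiag, ← diagonal_smul, exp_diagonal]
    simp [Complex.exp_eq_exp_ℂ]
  rw [hspec, hA, ← Matrix.smul_mul, ← Matrix.mul_smul, exp_units_conj, Units.mul_inv_eq_iff_eq_mul,
    one_mul, u.isUnit.mul_eq_left, hexp, Set.forall_mem_range, ← diagonal_one,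
    diagonal_injective.eq_iff, funext_iff]

end Matrix

theorem setOf_exp_smul_eq_one_general (d : ℕ) (J : Matrix (Fin d) (Fin d) ℝ)
    (hdiag : ∃ P D : Matrix (Fin d) (Fin d) ℂ, IsUnit P ∧ D.IsDiag ∧
      J.map Complex.ofReal = P * D * P⁻¹)
    (ω₀ : ℝ) (hω₀ : 0 < ω₀)
    (hspec : ∀ z ∈ spectrum ℂ (J.map Complex.ofReal), ∃ m : ℤ, z = Complex.I * ω₀ * m)
    (hmax : ∀ ω : ℝ, ω₀ < ω →
      ∃ z ∈ spectrum ℂ (J.map Complex.ofReal), ∀ m : ℤ, z ≠ Complex.I * ω * m) :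
    {t : ℝ | exp (t • J) = 1} = {t : ℝ | ∃ m : ℤ, t = 2 * Real.pi / ω₀ * m} := by
  obtain ⟨P, D, hP, hD, hPD⟩ := hdiag
  ext t
  rw [Set.mem_ofPred_eq, Matrix.exp_eq_one_iff_exp_map_ofReal_eq_one,
    Matrix.map_smul' _ _ _ Complex.ofReal_mul,
    Matrix.exp_smul_eq_one_iff_of_isDiag_conj hP hD hPD]
  exact Complex.forall_exp_ofReal_mul_eq_one_iff_of_maximal hω₀ hspec hmax t

/-- If the complexification of `J ≠ 0` is diagonalizable with all eigenvalues in `iω₀ℤ` and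
`ω₀ > 0` is maximal with this property, then `{t : exp(tJ) = 1} = (2π/ω₀)ℤ`. -/
theorem setOf_exp_smul_eq_one (d : ℕ) (J : Matrix (Fin d) (Fin d) ℝ) (hJ : J ≠ 0)
    (hdiag : ∃ P D : Matrix (Fin d) (Fin d) ℂ, IsUnit P ∧ D.IsDiag ∧
      J.map Complex.ofReal = P * D * P⁻¹)
    (ω₀ : ℝ) (hω₀ : 0 < ω₀)
    (hspec : ∀ z ∈ spectrum ℂ (J.map Complex.ofReal), ∃ m : ℤ, z = Complex.I * ω₀ * m)
    (hmax : ∀ ω : ℝ, ω₀ < ω →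
      ∃ z ∈ spectrum ℂ (J.map Complex.ofReal), ∀ m : ℤ, z ≠ Complex.I * ω * m) :
    {t : ℝ | exp (t • J) = 1} = {t : ℝ | ∃ m : ℤ, t = 2 * Real.pi / ω₀ * m} :=
  setOf_exp_smul_eq_one_general d J hdiag ω₀ hω₀ hspec hmax
end

section
/- Let J be a real d×d matrix and let G(J) be the group with underlying set ℝ^d × ℝ and multiplication (v,t)·(u,s) = (v + exp(t·J)·u, t+s). Then the center of G(J) equals {(u,s) ∈ ℝ^d × ℝ : J·u = 0 and exp(s·J) = 1}. -/
open scoped Matrix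
open NormedSpace

noncomputable section

/-- The almost Abelian group `G(J) = ℝ^d ⋊ ℝ` with multiplication
`(v,t)·(u,s) = (v + exp(tJ)u, t+s)`. -/
@[ext] structure GJ (d : ℕ) (J : Matrix (Fin d) (Fin d) ℝ) where
  v : Fin d → ℝ
  t : ℝ

namespace GJ

variable {d : ℕ} {J : Matrix (Fin d) (Fin d) ℝ}

lemma exp_smul_add (a b : ℝ) (J : Matrix (Fin d) (Fin d) ℝ) :
    exp ((a + b) • J) = exp (a • J) * exp (b • J) := by
  rw [add_smul]
  exact Matrix.exp_add_of_commute _ _ (((Commute.refl J).smul_left a).smul_right b)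

instance : Group (GJ d J) where
  mul p q := ⟨p.v + (exp (p.t • J)).mulVec q.v, p.t + q.t⟩
  one := ⟨0, 0⟩
  inv p := ⟨-(exp ((-p.t) • J)).mulVec p.v, -p.t⟩
  mul_assoc a b c := by
    ext i
    · show (a.v + (exp (a.t • J)).mulVec b.v + (exp ((a.t + b.t) • J)).mulVec c.v) i = _
      show _ = (a.v + (exp (a.t • J)).mulVec (b.v + (exp (b.t • J)).mulVec c.v)) i
      rw [exp_smul_add, ← Matrix.mulVec_mulVec, Matrix.mulVec_add, add_assoc]
    · exact add_assoc a.t b.t c.t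
  one_mul a := by
    ext i
    · show ((0 : Fin d → ℝ) + (exp ((0 : ℝ) • J)).mulVec a.v) i = a.v i
      rw [zero_smul, exp_zero, Matrix.one_mulVec, zero_add]
    · exact zero_add a.t
  mul_one a := by
    ext i
    · show (a.v + (exp (a.t • J)).mulVec 0) i = a.v i
      rw [Matrix.mulVec_zero, add_zero]
    · exact add_zero a.t
  inv_mul_cancel a := by
    ext i
    · show (-(exp ((-a.t) • J)).mulVec a.v + (exp ((-a.t) • J)).mulVec a.v) i
        = (0 : Fin d → ℝ) i
      rw [neg_add_cancel]
    · exact neg_add_cancel a.t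

/-- The topology of `G(J)` is that of the underlying space `ℝ^d × ℝ`. -/
instance : TopologicalSpace (GJ d J) :=
  TopologicalSpace.induced (fun g => (g.v, g.t)) inferInstance

lemma mul_def (p q : GJ d J) :
    p * q = ⟨p.v + (exp (p.t • J)).mulVec q.v, p.t + q.t⟩ := rfl

end GJ

/-! An element `(u, s)` commutes with `(v, t)` iff `v + exp(tJ)u = u + exp(sJ)v`. Taking `v = 0`
shows that `u` is fixed by the whole flow `t ↦ exp(tJ)`, which (differentiating at `t = 0`, or
integrating `d/dt exp(tJ)u = exp(tJ)Ju`) means `Ju = 0`; taking `t = 0` shows that `exp(sJ)`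
fixes every vector, i.e. `exp(sJ) = 1`. -/

namespace Matrix

section ExpFlow

-- The statements are norm-free; any matrix norm serves to make the calculus available.
attribute [local instance] Matrix.linftyOpNormedAddCommGroup Matrix.linftyOpNormedRing
  Matrix.linftyOpNormedAlgebra

variable {𝕂 n : Type*} [RCLike 𝕂] [Fintype n] [DecidableEq n]

theorem hasDerivAt_exp_smul_mulVec (J : Matrix n n 𝕂) (u : n → 𝕂) (t : 𝕂) :
    HasDerivAt (fun s : 𝕂 => exp (s • J) *ᵥ u) (exp (t • J) *ᵥ (J *ᵥ u)) t := by
  let applyAt : Matrix n n 𝕂 →L[𝕂] n → 𝕂 :=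
    LinearMap.toContinuousLinearMap ((mulVecBilin 𝕂 𝕂).flip u)
  rw [mulVec_mulVec]
  exact applyAt.hasFDerivAt.comp_hasDerivAt t (hasDerivAt_exp_smul_const J t)

theorem exp_smul_mulVec_eq_self_iff (J : Matrix n n 𝕂) (u : n → 𝕂) :
    (∀ t : 𝕂, exp (t • J) *ᵥ u = u) ↔ J *ᵥ u = 0 := by
  constructor
  · intro hfixed
    have hconst : HasDerivAt (fun s : 𝕂 => exp (s • J) *ᵥ u) 0 0 := by
      simpa only [hfixed] using hasDerivAt_const (0 : 𝕂) u
    simpa using (hasDerivAt_exp_smul_mulVec J u 0).unique hconst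
  · intro hJu t
    have hderiv (s : 𝕂) : HasDerivAt (fun s : 𝕂 => exp (s • J) *ᵥ u) 0 s := by
      simpa [hJu] using hasDerivAt_exp_smul_mulVec J u s
    simpa using is_const_of_deriv_eq_zero (fun s => (hderiv s).differentiableAt)
      (fun s => (hderiv s).deriv) t 0

end ExpFlow

end Matrix

namespace GJ

variable {d : ℕ} {J : Matrix (Fin d) (Fin d) ℝ}

theorem mem_center_iff {g : GJ d J} :
    g ∈ Subgroup.center (GJ d J) ↔
      ∀ h : GJ d J, h.v + exp (h.t • J) *ᵥ g.v = g.v + exp (g.t • J) *ᵥ h.v := by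
  rw [Subgroup.mem_center_iff]
  refine forall_congr' fun h => ?_
  rw [mul_def, mul_def, GJ.ext_iff]
  simp only [add_comm h.t g.t, and_true]

theorem mem_center_iff_forall_fixed {g : GJ d J} :
    g ∈ Subgroup.center (GJ d J) ↔
      (∀ t : ℝ, exp (t • J) *ᵥ g.v = g.v) ∧ ∀ v, exp (g.t • J) *ᵥ v = v := by
  rw [mem_center_iff]
  constructor
  · intro hcomm
    refine ⟨fun t => ?_, fun v => ?_⟩
    · simpa using hcomm ⟨0, t⟩
    · simpa [add_comm v] using (hcomm ⟨v, 0⟩).symm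
  · rintro ⟨hflow, hexp⟩ h
    rw [hflow, hexp, add_comm]

end GJ

/-- The center of `G(J)` is `{(u,s) : J·u = 0 ∧ exp(sJ) = 1}`. -/
theorem GJ.center_eq (d : ℕ) (J : Matrix (Fin d) (Fin d) ℝ) :
    (Subgroup.center (GJ d J) : Set (GJ d J)) =
      {g : GJ d J | J.mulVec g.v = 0 ∧ exp (g.t • J) = 1} := by
  ext g
  rw [SetLike.mem_coe, GJ.mem_center_iff_forall_fixed, Matrix.exp_smul_mulVec_eq_self_iff,
    Set.mem_ofPred_eq, Matrix.ext_iff_mulVec]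
  simp only [Matrix.one_mulVec]
end
end

section
/- Let J be a nonzero real d×d matrix and G(J) the topological group with underlying space ℝ^d × ℝ (product topology) and multiplication (v,t)·(u,s) = (v + exp(t·J)·u, t+s). Let N be a normal subgroup of G(J) that is discrete (in the subspace topology). Then N is contained in the center of G(J), and there exist k ≤ dim(ker J) + 1 and elements (v₁,t₁),…,(v_k,t_k) of the center of G(J) that are linearly independent as vectors of ℝ^{d+1} such that N is precisely the set of products (v₁,t₁)^{m₁}·…·(v_k,t_k)^{m_k} over (m₁,…,m_k) ∈ ℤ^k; in particular N is a free abelian group of rank k ≤ dim(ker J) + 1. -/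
open scoped Matrix
open NormedSpace

noncomputable section

/-!
Conjugating an element of `N` by the points of the connected group `G(J)` gives a continuous map
into the discrete `N`, which is therefore constant: `N` is central. A central `(v, t)` has
`exp (t • J) = 1` and `J *ᵥ v = 0`, so on the centre the group law is addition of coordinates and
the coordinate vectors of `N` form a discrete additive subgroup of `ker J × ℝ`. A `ℤ`-basis of such
a subgroup is `ℝ`-linearly independent, and the corresponding elements of `N` are the generators.
-/

open Module

theorem Subgroup.le_center_of_discreteTopology {G : Type*} [Group G] [TopologicalSpace G]
    [IsTopologicalGroup G] [PreconnectedSpace G] (N : Subgroup G) [N.Normal]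
    [DiscreteTopology N] : N ≤ Subgroup.center G := by
  intro n hn
  rw [Subgroup.mem_center_iff]
  intro g
  let conj : G → N := fun x => ⟨x * n * x⁻¹, ‹N.Normal›.conj_mem n hn x⟩
  have hconj : conj g = conj 1 :=
    PreconnectedSpace.constant inferInstance (by fun_prop)
  have hgn : g * n * g⁻¹ = n := by simpa [conj] using congrArg Subtype.val hconj
  exact mul_inv_eq_iff_eq_mul.mp hgn

theorem Module.Basis.linearIndependent_real_of_discreteTopology {E : Type*}
    [NormedAddCommGroup E] [NormedSpace ℝ E] [FiniteDimensional ℝ E] {L : Submodule ℤ E}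
    [DiscreteTopology L] {ι : Type*} [Fintype ι] (b : Basis ι ℤ L) :
    LinearIndependent ℝ fun i => (b i : E) := by
  have hspan : Submodule.span ℤ (Set.range fun i => (b i : E)) = L := by
    rw [Set.range_comp' Subtype.val b, ← Submodule.coe_subtype, ← Submodule.map_span,
      b.span_eq, Submodule.map_top, Submodule.range_subtype]
  have hdisc : DiscreteTopology (Submodule.span ℤ (Set.range fun i => (b i : E))) := by
    rw [hspan]; infer_instance
  have hind : LinearIndependent ℤ fun i => (b i : E) :=
    b.linearIndependent.map' L.subtype (Submodule.ker_subtype L)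
  rw [linearIndependent_iff_card_eq_finrank_span, Real.finrank_eq_int_finrank_of_discrete hdisc,
    ← linearIndependent_iff_card_eq_finrank_span]
  exact hind

section Matrix

variable {d : ℕ}

theorem Matrix.continuous_exp_smul (J : Matrix (Fin d) (Fin d) ℝ) :
    Continuous fun s : ℝ => exp (s • J) := by
  let : NormedRing (Matrix (Fin d) (Fin d) ℝ) := Matrix.linftyOpNormedRing
  let : NormedAlgebra ℝ (Matrix (Fin d) (Fin d) ℝ) := Matrix.linftyOpNormedAlgebra
  exact continuous_iff_continuousAt.2 fun t => (hasDerivAt_exp_smul_const J t).continuousAt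

theorem Matrix.mulVec_eq_zero_of_forall_exp_smul_mulVec {J : Matrix (Fin d) (Fin d) ℝ}
    {v : Fin d → ℝ} (h : ∀ s : ℝ, exp (s • J) *ᵥ v = v) : J *ᵥ v = 0 := by
  let : NormedRing (Matrix (Fin d) (Fin d) ℝ) := Matrix.linftyOpNormedRing
  let : NormedAlgebra ℝ (Matrix (Fin d) (Fin d) ℝ) := Matrix.linftyOpNormedAlgebra
  let applyTo : Matrix (Fin d) (Fin d) ℝ →L[ℝ] (Fin d → ℝ) :=
    LinearMap.toContinuousLinearMap ((Matrix.mulVecBilin ℝ ℝ).flip v)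
  -- `J *ᵥ v` is the derivative at `0` of the constant map `s ↦ exp (s • J) *ᵥ v`.
  have hderiv := applyTo.hasFDerivAt.comp_hasDerivAt (0 : ℝ) (hasDerivAt_exp_smul_const J 0)
  have hconst : HasDerivAt (applyTo ∘ fun s : ℝ => exp (s • J)) 0 0 :=
    (hasDerivAt_const (0 : ℝ) v).congr_of_eventuallyEq (.of_forall h)
  have := hconst.unique hderiv
  rw [zero_smul, exp_zero, one_mul] at this
  exact this.symm

theorem Matrix.card_le_finrank_ker_add_one {k : ℕ} {J : Matrix (Fin d) (Fin d) ℝ}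
    {u : Fin k → (Fin d → ℝ) × ℝ} (hu : LinearIndependent ℝ u) (hker : ∀ i, J *ᵥ (u i).1 = 0) :
    k ≤ finrank ℝ (LinearMap.ker J.mulVecLin) + 1 := by
  let embed := (LinearMap.ker J.mulVecLin).subtype.prodMap (LinearMap.id : ℝ →ₗ[ℝ] ℝ)
  have hspan : Submodule.span ℝ (Set.range u) ≤ LinearMap.range embed := by
    rw [Submodule.span_le]
    rintro _ ⟨i, rfl⟩
    exact ⟨(⟨(u i).1, hker i⟩, (u i).2), rfl⟩
  calc k = finrank ℝ (Submodule.span ℝ (Set.range u)) := by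
        rw [finrank_span_eq_card hu, Fintype.card_fin]
    _ ≤ finrank ℝ (LinearMap.range embed) := Submodule.finrank_mono hspan
    _ ≤ finrank ℝ (LinearMap.ker J.mulVecLin × ℝ) := embed.finrank_range_le
    _ = finrank ℝ (LinearMap.ker J.mulVecLin) + 1 := by rw [finrank_prod, finrank_self]

end Matrix

namespace GJ

variable {d : ℕ} {J : Matrix (Fin d) (Fin d) ℝ}

def toProd : GJ d J ≃ₜ (Fin d → ℝ) × ℝ where
  toFun g := (g.v, g.t)
  invFun w := ⟨w.1, w.2⟩
  left_inv _ := rfl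
  right_inv _ := rfl
  continuous_toFun := continuous_induced_dom
  continuous_invFun := continuous_induced_rng.2 continuous_id

@[fun_prop]
lemma continuous_v : Continuous (v : GJ d J → Fin d → ℝ) :=
  continuous_fst.comp toProd.continuous

@[fun_prop]
lemma continuous_t : Continuous (t : GJ d J → ℝ) :=
  continuous_snd.comp toProd.continuous

instance : IsTopologicalGroup (GJ d J) where
  continuous_mul := continuous_induced_rng.2 <|
    ((continuous_v.comp continuous_fst).add
      (((Matrix.continuous_exp_smul J).comp (continuous_t.comp continuous_fst)).matrix_mulVec
        (continuous_v.comp continuous_snd))).prodMk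
    ((continuous_t.comp continuous_fst).add (continuous_t.comp continuous_snd))
  continuous_inv := continuous_induced_rng.2 <|
    (((Matrix.continuous_exp_smul J).comp continuous_t.neg).matrix_mulVec continuous_v).neg.prodMk
      continuous_t.neg

instance : ConnectedSpace (GJ d J) :=
  toProd.symm.surjective.connectedSpace toProd.symm.continuous

variable {p : GJ d J}

lemma exp_smul_mulVec_v_of_mem_center (hp : p ∈ Subgroup.center (GJ d J)) (s : ℝ) :
    exp (s • J) *ᵥ p.v = p.v := by
  have := congrArg v (Subgroup.mem_center_iff.mp hp ⟨0, s⟩)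
  simpa [mul_def] using this

lemma exp_smul_t_eq_one_of_mem_center (hp : p ∈ Subgroup.center (GJ d J)) :
    exp (p.t • J) = 1 := by
  refine Matrix.ext_iff_mulVec.2 fun w => ?_
  have := congrArg v (Subgroup.mem_center_iff.mp hp ⟨w, 0⟩)
  simp only [mul_def, zero_smul, exp_zero, Matrix.one_mulVec] at this
  rw [Matrix.one_mulVec]
  exact add_left_cancel (this.symm.trans (add_comm _ _))

lemma mulVec_v_eq_zero_of_mem_center (hp : p ∈ Subgroup.center (GJ d J)) : J *ᵥ p.v = 0 :=
  Matrix.mulVec_eq_zero_of_forall_exp_smul_mulVec (exp_smul_mulVec_v_of_mem_center hp)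

lemma toProd_mul_of_mem_center (hp : p ∈ Subgroup.center (GJ d J)) (q : GJ d J) :
    toProd (p * q) = toProd p + toProd q := by
  simp [toProd, mul_def, exp_smul_t_eq_one_of_mem_center hp]

lemma toProd_zpow_of_mem_center (hp : p ∈ Subgroup.center (GJ d J)) (m : ℤ) :
    toProd (p ^ m) = m • toProd p := by
  induction m using Int.induction_on with
  | zero => rfl
  | succ n ih =>
    rw [zpow_add_one, toProd_mul_of_mem_center (zpow_mem hp _), ih, add_smul, one_smul]
  | pred n ih =>
    have h := toProd_mul_of_mem_center (zpow_mem hp (-n - 1)) p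
    rw [← zpow_add_one, sub_add_cancel, ih] at h
    rw [sub_smul, one_smul, h, add_sub_cancel_right]

lemma toProd_prod_ofFn_zpow {k : ℕ} {g : Fin k → GJ d J}
    (hg : ∀ i, g i ∈ Subgroup.center (GJ d J)) (m : Fin k → ℤ) :
    toProd (List.ofFn fun i => g i ^ m i).prod = ∑ i, m i • toProd (g i) := by
  induction k with
  | zero => rfl
  | succ k ih =>
    rw [List.ofFn_succ, List.prod_cons, Fin.sum_univ_succ,
      toProd_mul_of_mem_center (zpow_mem (hg 0) _), toProd_zpow_of_mem_center (hg 0),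
      ih (fun i => hg i.succ)]

def coordLattice (N : Subgroup (GJ d J)) (hN : N ≤ Subgroup.center (GJ d J)) :
    Submodule ℤ ((Fin d → ℝ) × ℝ) where
  carrier := (toProd (J := J)).symm ⁻¹' (N : Set (GJ d J))
  add_mem' {a b} ha hb := by
    have : (toProd.symm (a + b) : GJ d J) = toProd.symm a * toProd.symm b := by
      rw [toProd.symm_apply_eq, toProd_mul_of_mem_center (hN ha), toProd.apply_symm_apply,
        toProd.apply_symm_apply]
    rw [Set.mem_preimage, this]
    exact N.mul_mem ha hb
  zero_mem' := N.one_mem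
  smul_mem' m a ha := by
    have : (toProd.symm (m • a) : GJ d J) = toProd.symm a ^ m := by
      rw [toProd.symm_apply_eq, toProd_zpow_of_mem_center (hN ha), toProd.apply_symm_apply]
    rw [Set.mem_preimage, this]
    exact N.zpow_mem ha m

lemma toProd_mem_coordLattice {N : Subgroup (GJ d J)} (hN : N ≤ Subgroup.center (GJ d J))
    {x : GJ d J} : toProd x ∈ coordLattice N hN ↔ x ∈ N := by
  show toProd.symm (toProd x) ∈ N ↔ x ∈ N
  rw [toProd.symm_apply_apply]

instance {N : Subgroup (GJ d J)} (hN : N ≤ Subgroup.center (GJ d J)) [DiscreteTopology N] :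
    DiscreteTopology (coordLattice N hN) :=
  DiscreteTopology.preimage_of_continuous_injective (N : Set (GJ d J))
    (toProd (J := J)).symm.continuous toProd.symm.injective

end GJ

theorem GJ.discrete_normal_subgroup_structure_general (d : ℕ) (J : Matrix (Fin d) (Fin d) ℝ)
    (N : Subgroup (GJ d J)) (hnorm : N.Normal) (hdisc : DiscreteTopology N) :
    N ≤ Subgroup.center (GJ d J) ∧
    ∃ k : ℕ, k ≤ Module.finrank ℝ (LinearMap.ker J.mulVecLin) + 1 ∧
      ∃ g : Fin k → GJ d J, (∀ i, g i ∈ Subgroup.center (GJ d J)) ∧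
        LinearIndependent ℝ (fun i : Fin k => (((g i).v, (g i).t) : (Fin d → ℝ) × ℝ)) ∧
        ∀ x : GJ d J, x ∈ N ↔ ∃ m : Fin k → ℤ, x = (List.ofFn fun i => g i ^ m i).prod := by
  have hN : N ≤ Subgroup.center (GJ d J) := N.le_center_of_discreteTopology
  let L := GJ.coordLattice N hN
  let b := Module.finBasis ℤ L
  let g i : GJ d J := GJ.toProd.symm (b i : (Fin d → ℝ) × ℝ)
  have hgN i : g i ∈ N := (GJ.toProd_mem_coordLattice hN).1 (by simp [g])
  have hind : LinearIndependent ℝ fun i => GJ.toProd (g i) := by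
    simpa [g] using b.linearIndependent_real_of_discreteTopology
  refine ⟨hN, _, Matrix.card_le_finrank_ker_add_one hind
    fun i => GJ.mulVec_v_eq_zero_of_mem_center (hN (hgN i)), g, fun i => hN (hgN i), hind,
    fun x => ⟨fun hx => ?_, ?_⟩⟩
  · let y : L := ⟨_, (GJ.toProd_mem_coordLattice hN).2 hx⟩
    refine ⟨fun i => b.repr y i, GJ.toProd.injective ?_⟩
    calc GJ.toProd x = ((∑ i, b.repr y i • b i : L) : (Fin d → ℝ) × ℝ) := by rw [b.sum_repr]
      _ = _ := by
        simp only [GJ.toProd_prod_ofFn_zpow fun i => hN (hgN i), g, Homeomorph.apply_symm_apply,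
          Submodule.coe_sum, Submodule.coe_smul_of_tower]
  · rintro ⟨m, rfl⟩
    exact N.list_prod_mem (by simpa [List.mem_ofFn] using fun i => N.zpow_mem (hgN i) (m i))

/-- Every discrete normal subgroup `N` of `G(J)` is central and is the free abelian group on
`k ≤ dim ker J + 1` linearly independent central elements: `N` consists precisely of the
products `g₁^{m₁} ⋯ g_k^{m_k}`, `m ∈ ℤ^k`. -/
theorem GJ.discrete_normal_subgroup_structure (d : ℕ) (J : Matrix (Fin d) (Fin d) ℝ)
    (hJ : J ≠ 0) (N : Subgroup (GJ d J)) (hnorm : N.Normal) (hdisc : DiscreteTopology N) :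
    N ≤ Subgroup.center (GJ d J) ∧
    ∃ k : ℕ, k ≤ Module.finrank ℝ (LinearMap.ker J.mulVecLin) + 1 ∧
      ∃ g : Fin k → GJ d J, (∀ i, g i ∈ Subgroup.center (GJ d J)) ∧
        LinearIndependent ℝ (fun i : Fin k => (((g i).v, (g i).t) : (Fin d → ℝ) × ℝ)) ∧
        ∀ x : GJ d J, x ∈ N ↔ ∃ m : Fin k → ℤ, x = (List.ofFn fun i => g i ^ m i).prod :=
  GJ.discrete_normal_subgroup_structure_general d J N hnorm hdisc
end
end

section
/- Let J be a real d×d matrix and G(J) the group with underlying set ℝ^d × ℝ and multiplication (v,t)·(u,s) = (v + exp(t·J)·u, t+s). Then: (a) for every (u,s) ∈ G(J), conjugation by (u,s) is given by (u,s)·(v,t)·(u,s)⁻¹ = (exp(s·J)·v − (exp(t·J) − 1)·u, t) for all (v,t); equivalently it is the map (v,t) ↦ (t·S(t·J)·γ + Δ·v, t) with Δ = exp(s·J) and γ = −J·u, where S(A) = Σ_{n≥0} Aⁿ/(n+1)!; and (b) conversely, for every s ∈ ℝ and every γ in the range of J, the map (v,t) ↦ (t·S(t·J)·γ + exp(s·J)·v,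 t) is conjugation by some element of G(J). Hence the inner automorphisms of G(J) are exactly the maps (v,t) ↦ (t·S(t·J)·γ + Δ·v, t) with Δ = exp(s·J) for some s ∈ ℝ and γ in the range of J. -/
open scoped Matrix
open NormedSpace

noncomputable section

/-!
Conjugation by `(u, s)` fixes the `ℝ`-coordinate and acts on `ℝ^d` by the affine map
`v ↦ exp(sJ) v - (exp(tJ) - 1) u`. Since `t • S(tJ) * J = exp(tJ) - 1`, its translation part is
`t • S(tJ) γ` with `γ = -J u`; conversely `γ = J w` is realised by conjugating with `(-w, s)`.
-/

section BanachAlgebra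

variable {𝔸 : Type*} [NormedRing 𝔸] [NormedAlgebra ℝ 𝔸] [CompleteSpace 𝔸]

theorem summable_inv_factorial_succ_smul_pow (a : 𝔸) :
    Summable fun n : ℕ => ((n + 1).factorial : ℝ)⁻¹ • a ^ n := by
  refine .of_norm_bounded (norm_expSeries_summable' (𝕂 := ℝ) a) fun n => ?_
  rw [norm_smul, norm_smul]
  gcongr
  simp only [norm_inv, RCLike.norm_natCast]
  gcongr
  exact n.le_succ

theorem tsum_inv_factorial_succ_smul_pow_mul (a : 𝔸) :
    (∑' n : ℕ, ((n + 1).factorial : ℝ)⁻¹ • a ^ n) * a = exp a - 1 := by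
  have hexp := (hasSum_nat_add_iff' 1).mpr (exp_series_hasSum_exp' (𝕂 := ℝ) a)
  simp only [Finset.range_one, Finset.sum_singleton, Nat.factorial_zero, Nat.cast_one, inv_one,
    pow_zero, one_smul] at hexp
  rw [← (summable_inv_factorial_succ_smul_pow a).tsum_mul_right, ← hexp.tsum_eq]
  simp only [smul_mul_assoc, ← pow_succ]

end BanachAlgebra

-- The `L∞` operator norm induces the product topology in which `matS` is summed.
attribute [local instance] Matrix.linftyOpNormedRing Matrix.linftyOpNormedAlgebra in
theorem matS_mul {d : ℕ} (A : Matrix (Fin d) (Fin d) ℝ) : matS A * A = exp A - 1 :=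
  tsum_inv_factorial_succ_smul_pow_mul A

theorem smul_matS_smul_mulVec_mulVec {d : ℕ} (J : Matrix (Fin d) (Fin d) ℝ) (t : ℝ)
    (u : Fin d → ℝ) : t • matS (t • J) *ᵥ (J *ᵥ u) = (exp (t • J) - 1) *ᵥ u := by
  rw [← matS_mul, ← Matrix.mulVec_mulVec, Matrix.smul_mulVec, Matrix.mulVec_smul]

namespace GJ

variable {d : ℕ} {J : Matrix (Fin d) (Fin d) ℝ}

lemma inv_def (p : GJ d J) : p⁻¹ = ⟨-(exp ((-p.t) • J) *ᵥ p.v), -p.t⟩ := rfl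

theorem conj_eq (u : Fin d → ℝ) (s : ℝ) (v : Fin d → ℝ) (t : ℝ) :
    (⟨u, s⟩ : GJ d J) * ⟨v, t⟩ * (⟨u, s⟩ : GJ d J)⁻¹ =
      ⟨exp (s • J) *ᵥ v - (exp (t • J) - 1) *ᵥ u, t⟩ := by
  have hexp : exp ((s + t) • J) * exp ((-s) • J) = exp (t • J) := by
    rw [← exp_smul_add, add_neg_cancel_comm]
  simp only [mul_def, inv_def, Matrix.mulVec_neg, Matrix.mulVec_mulVec, hexp,
    Matrix.sub_mulVec, Matrix.one_mulVec, GJ.mk.injEq]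
  constructor <;> abel

def innerMap (s : ℝ) (γ : Fin d → ℝ) (p : GJ d J) : GJ d J :=
  ⟨p.t • matS (p.t • J) *ᵥ γ + exp (s • J) *ᵥ p.v, p.t⟩

theorem conj_eq_innerMap (g : GJ d J) :
    (fun p => g * p * g⁻¹) = innerMap g.t (-(J *ᵥ g.v)) := by
  funext p
  rw [innerMap, Matrix.mulVec_neg, smul_neg, smul_matS_smul_mulVec_mulVec, ← sub_eq_neg_add,
    ← conj_eq]

theorem exists_conj_eq_innerMap (s : ℝ) {γ : Fin d → ℝ} (hγ : γ ∈ LinearMap.range J.mulVecLin) :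
    ∃ g : GJ d J, (fun p => g * p * g⁻¹) = innerMap s γ := by
  obtain ⟨w, rfl⟩ := hγ
  refine ⟨⟨-w, s⟩, ?_⟩
  rw [conj_eq_innerMap, Matrix.mulVec_neg, neg_neg]
  rfl

end GJ

/-- Inner automorphisms of `G(J)`: conjugation by `(u,s)` is
`(v,t) ↦ (exp(sJ)v − (exp(tJ)−1)u, t) = (t·S(tJ)·γ + Δv, t)` with `Δ = exp(sJ)`, `γ = −Ju`;
conversely every such map with `γ ∈ range J` is a conjugation; hence the inner automorphisms
are exactly the maps of this form. -/
theorem GJ.inner_automorphisms (d : ℕ) (J : Matrix (Fin d) (Fin d) ℝ) :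
    (∀ (u : Fin d → ℝ) (s : ℝ) (v : Fin d → ℝ) (t : ℝ),
      ((⟨u, s⟩ : GJ d J) * ⟨v, t⟩ * (⟨u, s⟩ : GJ d J)⁻¹ =
        ⟨(exp (s • J)).mulVec v - (exp (t • J) - 1).mulVec u, t⟩) ∧
      ((⟨u, s⟩ : GJ d J) * ⟨v, t⟩ * (⟨u, s⟩ : GJ d J)⁻¹ =
        ⟨t • (matS (t • J)).mulVec (-(J.mulVec u)) + (exp (s • J)).mulVec v, t⟩)) ∧
    (∀ (s : ℝ), ∀ γ ∈ LinearMap.range J.mulVecLin, ∃ g : GJ d J, ∀ p : GJ d J,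
      g * p * g⁻¹ =
        ⟨p.t • (matS (p.t • J)).mulVec γ + (exp (s • J)).mulVec p.v, p.t⟩) ∧
    ({f : GJ d J → GJ d J | ∃ g : GJ d J, f = fun p => g * p * g⁻¹} =
      {f : GJ d J → GJ d J | ∃ s : ℝ, ∃ γ ∈ LinearMap.range J.mulVecLin,
        f = fun p =>
          ⟨p.t • (matS (p.t • J)).mulVec γ + (exp (s • J)).mulVec p.v, p.t⟩}) := by
  refine ⟨fun u s v t => ⟨conj_eq u s v t, congrFun (conj_eq_innerMap ⟨u, s⟩) ⟨v, t⟩⟩,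
    fun s γ hγ => ?_, ?_⟩
  · obtain ⟨g, hg⟩ := exists_conj_eq_innerMap s hγ
    exact ⟨g, congrFun hg⟩
  · ext f
    constructor
    · rintro ⟨g, rfl⟩
      exact ⟨g.t, -(J *ᵥ g.v), ⟨-g.v, Matrix.mulVec_neg g.v J⟩, conj_eq_innerMap g⟩
    · rintro ⟨s, γ, hγ, rfl⟩
      obtain ⟨g, hg⟩ := exists_conj_eq_innerMap s hγ
      exact ⟨g, hg.symm⟩
end
end

section
/- Let X, Y, Z be complex n×n matrices such that X·Y − Y·X = Z, X·Z = Z·X, Y·Z = Z·Y, and Z is anti-Hermitian (the conjugate transpose of Z equals −Z). Then Z = 0. -/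
/-!
Since `Z` commutes with `X`, cyclicity of the trace gives `tr (Z [X, Y]) = 0`, that is `tr (Z Z) = 0`.
For anti-Hermitian `Z` this says `tr (Zᴴ Z) = 0`, which forces `Z = 0`.
-/

open scoped Matrix ComplexOrder

namespace Matrix

theorem trace_mul_commutator_eq_zero_of_mul_comm {n R : Type*} [Fintype n] [CommRing R]
    {X Z : Matrix n n R} (Y : Matrix n n R) (hXZ : X * Z = Z * X) :
    trace (Z * (X * Y - Y * X)) = 0 := by
  calc trace (Z * (X * Y - Y * X)) = trace (X * (Z * Y)) - trace (Z * (Y * X)) := by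
        rw [mul_sub, trace_sub, ← mul_assoc Z, ← hXZ, mul_assoc]
    _ = 0 := by rw [trace_mul_comm, mul_assoc, sub_self]

theorem eq_zero_of_conjTranspose_eq_neg_of_trace_mul_self_eq_zero {n R : Type*} [Fintype n]
    [PartialOrder R] [NonUnitalRing R] [StarRing R] [StarOrderedRing R] [NoZeroDivisors R]
    {Z : Matrix n n R} (hZ : Zᴴ = -Z) (htr : trace (Z * Z) = 0) : Z = 0 := by
  rw [← trace_conjTranspose_mul_self_eq_zero_iff, hZ, neg_mul, trace_neg, htr, neg_zero]

end Matrix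

theorem antiHermitian_commutator_eq_zero_general (n : ℕ) (X Y Z : Matrix (Fin n) (Fin n) ℂ)
    (h1 : X * Y - Y * X = Z) (h2 : X * Z = Z * X)
    (h4 : Zᴴ = -Z) : Z = 0 := by
  have htr := Matrix.trace_mul_commutator_eq_zero_of_mul_comm Y h2
  rw [h1] at htr
  exact Matrix.eq_zero_of_conjTranspose_eq_neg_of_trace_mul_self_eq_zero h4 htr

/-- If `[X,Y] = Z`, `Z` commutes with `X` and `Y`, and `Z` is anti-Hermitian, then `Z = 0`. -/
theorem antiHermitian_commutator_eq_zero (n : ℕ) (X Y Z : Matrix (Fin n) (Fin n) ℂ)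
    (h1 : X * Y - Y * X = Z) (h2 : X * Z = Z * X) (h3 : Y * Z = Z * Y)
    (h4 : Zᴴ = -Z) : Z = 0 :=
  antiHermitian_commutator_eq_zero_general n X Y Z h1 h2 h4
end
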